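/- In the binary voting model with N agents, suppose the number of friendly agents is less than μ·N and the number of unfriendly agents is less than (1−μ)·N. Let e > 0, let Σ* be a regular strategy profile with 1 − A(Σ*) ≤ e, and let Σ' be any strategy profile with 1 − A(Σ') ≥ (B+1)·e. Then for every contingent agent n, ut_n(Σ') < ut_n(Σ*). -/

import Mathlib

/-!
Write the expected utility of an agent as the utility of the always-correct outcome minus a
regret: the probability of each wrong outcome weighted by the agent's utility gap in that state.
For a contingent agent both gaps are integers in `[1, B]`, so the regret lies between the error
rate `1 - A(Σ)` and `B` times it. Hence the regret under `Σ*` is at most `B e`, while under `Σ'`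
it is at least `(B + 1) e > B e`.
-/

namespace Voting

/-- The two world states: `L` (low) and `H` (high). -/
inductive WState : Type
  | L
  | H
deriving DecidableEq

instance : Fintype WState := ⟨{WState.L, WState.H}, fun x => by cases x <;> simp⟩

/-- The two alternatives: `A` (accept) and `R` (reject). -/
inductive Alt : Type
  | A
  | R
deriving DecidableEq

instance : Fintype Alt := ⟨{Alt.A, Alt.R}, fun x => by cases x <;> simp⟩

/-- The shared parameters of a binary voting instance. -/
structure BParams where
  /-- majority threshold -/
  μ : ℝ
  hμ0 : 0 < μ
  hμ1 : μ < 1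
  /-- prior of state `L` -/
  PL : ℝ
  /-- prior of state `H` -/
  PH : ℝ
  hPL : 0 < PL
  hPH : 0 < PH
  hPsum : PL + PH = 1
  /-- `Psig s ω` : probability of signal `s` in state `ω`; `true` is the signal `h`,
  `false` is the signal `l`. -/
  Psig : Bool → WState → ℝ
  hPsig : ∀ s ω, 0 ≤ Psig s ω
  hPsigsum : ∀ ω, Psig false ω + Psig true ω = 1
  /-- positive correlation: `P_{hH} > P_{hL}` -/
  hcorr : Psig true WState.L < Psig true WState.H
  /-- upper bound of the utility functions -/
  B : ℕ
  hB : 0 < B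

/-- A binary voting instance with `N` agents. -/
structure BInstance extends BParams where
  N : ℕ
  /-- the utility function of each agent -/
  u : Fin N → WState → Alt → ℕ
  hub : ∀ n ω a, u n ω a ≤ B
  huA : ∀ n, u n WState.L Alt.A < u n WState.H Alt.A
  huR : ∀ n, u n WState.H Alt.R < u n WState.L Alt.R

/-- A (mixed) strategy profile: for each agent, the probability of voting for `A`
upon each signal. -/
abbrev Profile (I : BInstance) : Type := Fin I.N → Bool → ℝ

/-- All coordinates of the profile are genuine probabilities. -/
def ValidProfile (I : BInstance) (sp : Profile I) : Prop :=
  ∀ n s, 0 ≤ sp n s ∧ sp n s ≤ 1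

/-- Probability that agent `n` votes for `A`, conditioned on the world state `ω`. -/
noncomputable def pA (I : BInstance) (sp : Profile I) (n : Fin I.N) (ω : WState) : ℝ :=
  I.Psig false ω * sp n false + I.Psig true ω * sp n true

open Finset in
/-- `lambdaA I sp ω` : the probability that at least `μ·N` agents vote for `A`,
conditioned on the world state `ω` (conditionally on the state, the votes are independent,
agent `n` voting for `A` with probability `pA I sp n ω`). -/
noncomputable def lambdaA (I : BInstance) (sp : Profile I) (ω : WState) : ℝ :=
  ∑ v : Fin I.N → Bool,
    if I.μ * (I.N : ℝ) ≤ ((univ.filter fun n => v n = true).card : ℝ) then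
      ∏ n, (if v n = true then pA I sp n ω else 1 - pA I sp n ω)
    else 0

/-- The fidelity of a strategy profile: the probability that the informed majority
decision is reached. -/
noncomputable def fid (I : BInstance) (sp : Profile I) : ℝ :=
  I.PL * (1 - lambdaA I sp WState.L) + I.PH * lambdaA I sp WState.H

/-- The ex-ante expected utility of agent `n` under profile `sp`. -/
noncomputable def ut (I : BInstance) (sp : Profile I) (n : Fin I.N) : ℝ :=
  I.PL * (lambdaA I sp WState.L * (I.u n WState.L Alt.A : ℝ)
      + (1 - lambdaA I sp WState.L) * (I.u n WState.L Alt.R : ℝ))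
    + I.PH * (lambdaA I sp WState.H * (I.u n WState.H Alt.A : ℝ)
      + (1 - lambdaA I sp WState.H) * (I.u n WState.H Alt.R : ℝ))

/-- A friendly agent prefers `A` in both states. -/
def Friendly (I : BInstance) (n : Fin I.N) : Prop :=
  ∀ ω, I.u n ω Alt.R < I.u n ω Alt.A

/-- An unfriendly agent prefers `R` in both states. -/
def Unfriendly (I : BInstance) (n : Fin I.N) : Prop :=
  ∀ ω, I.u n ω Alt.A < I.u n ω Alt.R

/-- A contingent agent prefers `A` in state `H` and `R` in state `L`. -/
def Contingent (I : BInstance) (n : Fin I.N) : Prop :=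
  I.u n WState.H Alt.R < I.u n WState.H Alt.A ∧ I.u n WState.L Alt.A < I.u n WState.L Alt.R

/-- A profile is regular if every friendly agent always votes for `A` and every
unfriendly agent always votes for `R`. -/
def Regular (I : BInstance) (sp : Profile I) : Prop :=
  (∀ n, Friendly I n → ∀ s, sp n s = 1) ∧ (∀ n, Unfriendly I n → ∀ s, sp n s = 0)

/-- `ε`-strong Bayes Nash Equilibrium: no coalition `D` can deviate so that no member
is worse off and some member gains more than `ε`. -/
def IsEpsBNE (I : BInstance) (sp : Profile I) (ε : ℝ) : Prop :=
  ¬ ∃ (D : Set (Fin I.N)) (sp' : Profile I),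
      ValidProfile I sp' ∧
      (∀ n, n ∉ D → sp' n = sp n) ∧
      (∀ n ∈ D, ut I sp n ≤ ut I sp' n) ∧
      (∃ n ∈ D, ut I sp n + ε < ut I sp' n)

/-- Number of friendly agents. -/
noncomputable def friendlyCount (I : BInstance) : ℕ := {n | Friendly I n}.ncard

/-- Number of unfriendly agents. -/
noncomputable def unfriendlyCount (I : BInstance) : ℕ := {n | Unfriendly I n}.ncard

/-- Number of contingent agents. -/
noncomputable def contingentCount (I : BInstance) : ℕ := {n | Contingent I n}.ncard

theorem sum_prod_ite_eq_one {ι : Type*} [Fintype ι] [DecidableEq ι] (p : ι → ℝ) :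
    ∑ v : ι → Bool, ∏ i, (if v i = true then p i else 1 - p i) = 1 := by
  rw [← Fintype.prod_sum (fun i (b : Bool) => if b = true then p i else 1 - p i)]
  simp

section

variable {I : BInstance} {sp : Profile I}

theorem pA_nonneg (hval : ValidProfile I sp) (n : Fin I.N) (ω : WState) :
    0 ≤ pA I sp n ω :=
  add_nonneg (mul_nonneg (I.hPsig false ω) (hval n false).1)
    (mul_nonneg (I.hPsig true ω) (hval n true).1)

theorem pA_le_one (hval : ValidProfile I sp) (n : Fin I.N) (ω : WState) :
    pA I sp n ω ≤ 1 :=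
  calc pA I sp n ω ≤ I.Psig false ω * 1 + I.Psig true ω * 1 := by
        unfold pA
        gcongr
        exacts [I.hPsig false ω, (hval n false).2, I.hPsig true ω, (hval n true).2]
    _ = 1 := by rw [mul_one, mul_one, I.hPsigsum ω]

theorem prod_ite_pA_nonneg (hval : ValidProfile I sp) (ω : WState) (v : Fin I.N → Bool) :
    0 ≤ ∏ n, (if v n = true then pA I sp n ω else 1 - pA I sp n ω) :=
  Finset.prod_nonneg fun n _ => by
    split
    · exact pA_nonneg hval n ω
    · exact sub_nonneg.2 (pA_le_one hval n ω)

theorem lambdaA_nonneg (hval : ValidProfile I sp) (ω : WState) : 0 ≤ lambdaA I sp ω :=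
  Finset.sum_nonneg fun v _ => by
    split
    · exact prod_ite_pA_nonneg hval ω v
    · exact le_rfl

theorem lambdaA_le_one (hval : ValidProfile I sp) (ω : WState) : lambdaA I sp ω ≤ 1 :=
  calc lambdaA I sp ω
      ≤ ∑ v : Fin I.N → Bool, ∏ n, (if v n = true then pA I sp n ω else 1 - pA I sp n ω) :=
        Finset.sum_le_sum fun v _ => by
          split
          · exact le_rfl
          · exact prod_ite_pA_nonneg hval ω v
    _ = 1 := sum_prod_ite_eq_one _

end

noncomputable def errorRate (I : BInstance) (sp : Profile I) : ℝ :=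
  I.PL * lambdaA I sp WState.L + I.PH * (1 - lambdaA I sp WState.H)

/-- The utilities are cast to `ℝ` before subtracting, so the gaps are not truncated. -/
noncomputable def regret (I : BInstance) (sp : Profile I) (n : Fin I.N) : ℝ :=
  I.PL * lambdaA I sp WState.L * ((I.u n WState.L Alt.R : ℝ) - I.u n WState.L Alt.A)
    + I.PH * (1 - lambdaA I sp WState.H) * ((I.u n WState.H Alt.A : ℝ) - I.u n WState.H Alt.R)

section

variable (I : BInstance) (sp : Profile I)

theorem one_sub_fid : 1 - fid I sp = errorRate I sp := by
  unfold fid errorRate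
  linear_combination -I.hPsum

theorem ut_eq_sub_regret (n : Fin I.N) :
    ut I sp n = I.PL * I.u n WState.L Alt.R + I.PH * I.u n WState.H Alt.A - regret I sp n := by
  unfold ut regret
  ring

variable {I sp}

theorem errorRate_le_regret (hval : ValidProfile I sp) {n : Fin I.N} (hn : Contingent I n) :
    errorRate I sp ≤ regret I sp n := by
  have gapL : (1 : ℝ) ≤ (I.u n WState.L Alt.R : ℝ) - I.u n WState.L Alt.A := by
    have : I.u n WState.L Alt.A + 1 ≤ I.u n WState.L Alt.R := hn.2
    rw [le_sub_iff_add_le']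
    exact_mod_cast this
  have gapH : (1 : ℝ) ≤ (I.u n WState.H Alt.A : ℝ) - I.u n WState.H Alt.R := by
    have : I.u n WState.H Alt.R + 1 ≤ I.u n WState.H Alt.A := hn.1
    rw [le_sub_iff_add_le']
    exact_mod_cast this
  have hL : 0 ≤ I.PL * lambdaA I sp WState.L := mul_nonneg I.hPL.le (lambdaA_nonneg hval _)
  have hH : 0 ≤ I.PH * (1 - lambdaA I sp WState.H) :=
    mul_nonneg I.hPH.le (sub_nonneg.2 (lambdaA_le_one hval _))
  unfold errorRate regret
  nlinarith

theorem regret_le_B_mul_errorRate (hval : ValidProfile I sp) (n : Fin I.N) :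
    regret I sp n ≤ I.B * errorRate I sp := by
  have gap_le_B (a b : ℕ) (ha : a ≤ I.B) : (a : ℝ) - b ≤ I.B := by
    have : (a : ℝ) ≤ I.B := by exact_mod_cast ha
    linarith [(b.cast_nonneg : (0 : ℝ) ≤ b)]
  have gapL := gap_le_B _ (I.u n WState.L Alt.A) (I.hub n WState.L Alt.R)
  have gapH := gap_le_B _ (I.u n WState.H Alt.R) (I.hub n WState.H Alt.A)
  have hL : 0 ≤ I.PL * lambdaA I sp WState.L := mul_nonneg I.hPL.le (lambdaA_nonneg hval _)
  have hH : 0 ≤ I.PH * (1 - lambdaA I sp WState.H) :=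
    mul_nonneg I.hPH.le (sub_nonneg.2 (lambdaA_le_one hval _))
  unfold errorRate regret
  nlinarith

end

theorem contingent_prefers_high_fidelity_general (I : BInstance)
    (e : ℝ) (he : 0 < e)
    (sp₁ : Profile I) (hval₁ : ValidProfile I sp₁)
    (h₁ : 1 - fid I sp₁ ≤ e)
    (sp₂ : Profile I) (hval₂ : ValidProfile I sp₂)
    (h₂ : ((I.B : ℝ) + 1) * e ≤ 1 - fid I sp₂) :
    ∀ n, Contingent I n → ut I sp₂ n < ut I sp₁ n := by
  intro n hn
  rw [one_sub_fid] at h₁ h₂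
  have : regret I sp₁ n < regret I sp₂ n :=
    calc regret I sp₁ n ≤ I.B * errorRate I sp₁ := regret_le_B_mul_errorRate hval₁ n
      _ ≤ I.B * e := mul_le_mul_of_nonneg_left h₁ I.B.cast_nonneg
      _ < (I.B + 1) * e := by linarith
      _ ≤ errorRate I sp₂ := h₂
      _ ≤ regret I sp₂ n := errorRate_le_regret hval₂ hn
  rw [ut_eq_sub_regret, ut_eq_sub_regret]
  linarith

/-- Claim 2 in the proof of Lemma 1. Suppose the friendly agents are
fewer than `μ·N` and the unfriendly agents are fewer than `(1-μ)·N`. If a regular profile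
`sp₁` has error rate `1 - A(sp₁) ≤ e` while another profile `sp₂` has error rate
`1 - A(sp₂) ≥ (B+1)·e` for some `e > 0`, then every contingent agent strictly prefers
`sp₁` to `sp₂`. -/
theorem contingent_prefers_high_fidelity (I : BInstance)
    (hF : (friendlyCount I : ℝ) < I.μ * (I.N : ℝ))
    (hU : (unfriendlyCount I : ℝ) < (1 - I.μ) * (I.N : ℝ))
    (e : ℝ) (he : 0 < e)
    (sp₁ : Profile I) (hval₁ : ValidProfile I sp₁) (hreg₁ : Regular I sp₁)
    (h₁ : 1 - fid I sp₁ ≤ e)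
    (sp₂ : Profile I) (hval₂ : ValidProfile I sp₂)
    (h₂ : ((I.B : ℝ) + 1) * e ≤ 1 - fid I sp₂) :
    ∀ n, Contingent I n → ut I sp₂ n < ut I sp₁ n :=
  contingent_prefers_high_fidelity_general I e he sp₁ hval₁ h₁ sp₂ hval₂ h₂

end Voting
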